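/- arXiv:1910.09684 — 4 statements merged into one kernel-verified Lean document; each statement's English description precedes it below -/
import Mathlib

section
/- Let T1 and T2 be two tournaments on the vertex set {1,...,n} (n ≥ 1). Then there exists a vertex ν such that for every vertex j, the relation ν ⇒ j holds, i.e., ν = j, or (ν,j) is an edge of T1, or (ν,j) is an edge of T2, or there exists a vertex k with (ν,k) an edge of T1 and (k,j) an edge of T2. -/
open Finset

/-- Auxiliary: in a tournament restricted to a finset `C`, the sum of out-degrees
within `C` is independent of the tournament. -/
lemma tourn_sum_eq {n : ℕ} (C : Finset (Fin n)) (E : Fin n → Fin n → Prop)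
    [DecidablePred fun p : Fin n × Fin n => E p.1 p.2]
    [∀ v, DecidablePred (E v)]
    (hirr : ∀ i, ¬ E i i) (hT : ∀ i j : Fin n, i ≠ j → (E i j ↔ ¬ E j i)) :
    2 * ∑ v ∈ C, (C.filter (E v)).card
      = ∑ v ∈ C, ∑ w ∈ C, (if v = w then 0 else 1) := by
  have h1 : ∑ v ∈ C, (C.filter (E v)).card
      = ∑ v ∈ C, ∑ w ∈ C, (if E v w then 1 else 0) := by
    refine Finset.sum_congr rfl fun v _ => ?_
    exact Finset.card_filter _ _
  have h2 : ∑ v ∈ C, ∑ w ∈ C, (if E v w then 1 else 0)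
      = ∑ v ∈ C, ∑ w ∈ C, (if E w v then 1 else 0) := Finset.sum_comm
  have h3 : ∀ v ∈ C, ∀ w ∈ C,
      ((if E v w then 1 else 0) + (if E w v then 1 else 0) : ℕ)
        = (if v = w then 0 else 1) := by
    intro v _ w _
    by_cases hvw : v = w
    · subst hvw; simp [hirr v]
    · by_cases h : E v w
      · have : ¬ E w v := by
          have := (hT v w hvw).mp h; exact this
        simp [h, this, hvw]
      · have : E w v := (hT w v (Ne.symm hvw)).mpr h
        simp [h, this, hvw]
  calc 2 * ∑ v ∈ C, (C.filter (E v)).card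
      = (∑ v ∈ C, ∑ w ∈ C, (if E v w then 1 else 0))
        + (∑ v ∈ C, ∑ w ∈ C, (if E w v then 1 else 0)) := by
        rw [h1, two_mul, h2]
    _ = ∑ v ∈ C, ∑ w ∈ C, ((if E v w then 1 else 0) + (if E w v then 1 else 0)) := by
        rw [← Finset.sum_add_distrib]
        refine Finset.sum_congr rfl fun v _ => ?_
        rw [← Finset.sum_add_distrib]
    _ = ∑ v ∈ C, ∑ w ∈ C, (if v = w then 0 else 1) := by
        refine Finset.sum_congr rfl fun v hv => Finset.sum_congr rfl fun w hw => h3 v hv w hw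

/-- For any two tournaments `T1`, `T2` on `{1,…,n}` (n ≥ 1) there is a
vertex `ν` such that `ν ⇒ j` for every vertex `j`, where `i ⇒ j` means `i = j`,
or `(i,j) ∈ E1`, or `(i,j) ∈ E2`, or there is `k` with `(i,k) ∈ E1` and `(k,j) ∈ E2`. -/
theorem two_rounds_suffice (n : ℕ) (hn : 1 ≤ n)
    (E1 E2 : Fin n → Fin n → Prop)
    (hT1irr : ∀ i, ¬ E1 i i)
    (hT1 : ∀ i j : Fin n, i ≠ j → (E1 i j ↔ ¬ E1 j i))
    (hT2irr : ∀ i, ¬ E2 i i)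
    (hT2 : ∀ i j : Fin n, i ≠ j → (E2 i j ↔ ¬ E2 j i)) :
    ∃ ν : Fin n, ∀ j : Fin n,
      ν = j ∨ E1 ν j ∨ E2 ν j ∨ ∃ k : Fin n, E1 ν k ∧ E2 k j := by
  classical
  by_contra hcon
  push_neg at hcon
  choose f hf1 hf2 hf3 hf4 using hcon
  -- key: f ν T2-beats the closed T1-out-neighborhood of ν
  have hP : ∀ ν k : Fin n, (k = ν ∨ E1 ν k) → E2 (f ν) k := by
    intro ν k hk
    rcases hk with rfl | hk
    · by_contra hc
      exact hf3 k ((hT2 k (f k) (hf1 k)).mpr hc)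
    · have hkne : f ν ≠ k := by
        rintro rfl; exact hf2 ν hk
      by_contra hc
      exact (hf4 ν k hk) ((hT2 k (f ν) (Ne.symm hkne)).mpr (by
        intro h; exact hc h))
  -- find a cycle of f
  set x : Fin n := ⟨0, hn⟩ with hx
  obtain ⟨a, b, hab, heq⟩ : ∃ a b : Fin (n+1), a ≠ b ∧ f^[a.1] x = f^[b.1] x := by
    have hcard : Fintype.card (Fin n) < Fintype.card (Fin (n+1)) := by simp
    obtain ⟨a, b, hab, h⟩ := Fintype.exists_ne_map_eq_of_card_lt
      (fun i : Fin (n+1) => f^[i.1] x) hcard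
    exact ⟨a, b, hab, h⟩
  wlog hlt : a.1 < b.1 generalizing a b
  · exact this b a (Ne.symm hab) heq.symm
      (lt_of_le_of_ne (not_lt.mp hlt) (fun h => hab (Fin.ext h.symm)))
  set p : ℕ := b.1 - a.1 with hp
  have hppos : 0 < p := Nat.sub_pos_of_lt hlt
  set x0 : Fin n := f^[a.1] x with hx0
  have hper : f^[p] x0 = x0 := by
    have : f^[p + a.1] x = f^[a.1] x := by
      rw [Nat.sub_add_cancel hlt.le]; exact heq.symm
    rw [hx0, ← Function.iterate_add_apply]; exact this
  set C : Finset (Fin n) := (Finset.range p).image (fun k => f^[k] x0) with hC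
  have hmemC : ∀ k < p, f^[k] x0 ∈ C := by
    intro k hk
    exact Finset.mem_image.mpr ⟨k, Finset.mem_range.mpr hk, rfl⟩
  have hx0C : x0 ∈ C := hmemC 0 hppos
  have hmaps : ∀ v ∈ C, f v ∈ C := by
    intro v hv
    obtain ⟨k, hk, rfl⟩ := Finset.mem_image.mp hv
    rw [Finset.mem_range] at hk
    rcases Nat.lt_or_ge (k+1) p with h | h
    · have : f (f^[k] x0) = f^[k+1] x0 := (Function.iterate_succ_apply' f k x0).symm
      rw [this]; exact hmemC _ h
    · have hkp : k + 1 = p := le_antisymm hk h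
      have : f (f^[k] x0) = f^[k+1] x0 := (Function.iterate_succ_apply' f k x0).symm
      rw [this, hkp, hper]; exact hx0C
  have hsurj : C ⊆ C.image f := by
    intro w hw
    obtain ⟨k, hk, rfl⟩ := Finset.mem_image.mp hw
    rw [Finset.mem_range] at hk
    rcases k with _ | m
    · refine Finset.mem_image.mpr ⟨f^[p-1] x0, hmemC _ (Nat.sub_lt hppos one_pos), ?_⟩
      rw [← Function.iterate_succ_apply' f (p-1) x0,
        Nat.succ_eq_add_one, Nat.sub_add_cancel hppos, hper]
      rfl
    · exact Finset.mem_image.mpr ⟨f^[m] x0, hmemC m (Nat.lt_of_succ_lt hk),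
        (Function.iterate_succ_apply' f m x0).symm⟩
  have himg : C.image f = C :=
    le_antisymm (Finset.image_subset_iff.mpr hmaps) hsurj
  have hinj : ∀ v ∈ C, ∀ w ∈ C, f v = f w → v = w := by
    have := Finset.injOn_of_card_image_eq (f := f) (s := C) (by rw [himg])
    intro v hv w hw h
    exact this (Finset.mem_coe.mpr hv) (Finset.mem_coe.mpr hw) h
  -- degree counting
  have hkey : ∀ v ∈ C, (C.filter (E1 v)).card + 1 ≤ (C.filter (E2 (f v))).card := by
    intro v hv
    have hsub : insert v (C.filter (E1 v)) ⊆ C.filter (E2 (f v)) := by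
      intro w hw
      rcases Finset.mem_insert.mp hw with rfl | hw
      · exact Finset.mem_filter.mpr ⟨hv, hP w w (Or.inl rfl)⟩
      · obtain ⟨hwC, hE⟩ := Finset.mem_filter.mp hw
        exact Finset.mem_filter.mpr ⟨hwC, hP v w (Or.inr hE)⟩
    have hvnot : v ∉ C.filter (E1 v) := by
      simp [Finset.mem_filter, hT1irr v]
    calc (C.filter (E1 v)).card + 1 = (insert v (C.filter (E1 v))).card :=
          (Finset.card_insert_of_notMem hvnot).symm
      _ ≤ (C.filter (E2 (f v))).card := Finset.card_le_card hsub
  have hsum1 : ∑ v ∈ C, (C.filter (E2 v)).card = ∑ v ∈ C, (C.filter (E2 (f v))).card := by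
    have h := Finset.sum_image (f := fun v => (C.filter (E2 v)).card) hinj
    rw [himg] at h
    simpa using h

  have hsums : ∑ v ∈ C, (C.filter (E1 v)).card = ∑ v ∈ C, (C.filter (E2 v)).card := by
    have h1 := tourn_sum_eq C E1 hT1irr hT1
    have h2 := tourn_sum_eq C E2 hT2irr hT2
    omega
  have hfinal : ∑ v ∈ C, (C.filter (E1 v)).card + C.card
      ≤ ∑ v ∈ C, (C.filter (E2 (f v))).card := by
    calc ∑ v ∈ C, (C.filter (E1 v)).card + C.card
        = ∑ v ∈ C, ((C.filter (E1 v)).card + 1) := by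
          have h : ∑ v ∈ C, ((C.filter (E1 v)).card + 1)
              = (∑ v ∈ C, (C.filter (E1 v)).card) + ∑ v ∈ C, (1 : ℕ) :=
            Finset.sum_add_distrib
          rw [h, Finset.sum_const, smul_eq_mul, mul_one]
      _ ≤ ∑ v ∈ C, (C.filter (E2 (f v))).card := Finset.sum_le_sum hkey
  have hCpos : 0 < C.card := Finset.card_pos.mpr ⟨x0, hx0C⟩
  omega
end

section
/- Let T1 and T2 be two tournaments on the vertex set {1,...,n} (n ≥ 1). Then there exists a vertex μ such that for every vertex i, the relation i ⇒ μ holds, i.e., i = μ, or (i,μ) is an edge of T1, or (i,μ) is an edge of T2, or there exists a vertex k with (i,k) an edge of T1 and (k,μ) an edge of T2. -/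
/-!
Suppose no vertex is absorbed and pick, for every `μ`, a vertex `g μ` with `¬ g μ ⇒ μ`.
Then `μ` beats `g μ` in both tournaments, and every `T2`-in-neighbour of `μ` beats `g μ` in `T1`.
Along an orbit `x, g x, g² x, …` this forces each point to beat every later point in both
tournaments, so the orbit is injective, which is impossible on a finite vertex set.
-/

variable {α : Type*} {E E1 E2 : α → α → Prop}

/-- The relation `i ⇒ j`. -/
def TwoStepReach (E1 E2 : α → α → Prop) (i j : α) : Prop :=
  i = j ∨ E1 i j ∨ E2 i j ∨ ∃ k, E1 i k ∧ E2 k j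

theorem asymm_of_tournament (irrefl : ∀ i, ¬ E i i)
    (tourn : ∀ i j, i ≠ j → (E i j ↔ ¬ E j i)) (i j : α) (h : E i j) : ¬ E j i := by
  rcases eq_or_ne i j with rfl | hij
  · exact irrefl i
  · exact (tourn i j hij).mp h

theorem total_of_tournament (tourn : ∀ i j, i ≠ j → (E i j ↔ ¬ E j i)) (i j : α)
    (hij : i ≠ j) : E i j ∨ E j i :=
  or_iff_not_imp_right.mpr (tourn i j hij).mpr

theorem beats_of_not_twoStepReach {v μ : α} (total1 : ∀ i j, i ≠ j → E1 i j ∨ E1 j i)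
    (total2 : ∀ i j, i ≠ j → E2 i j ∨ E2 j i) (h : ¬ TwoStepReach E1 E2 v μ) :
    E1 μ v ∧ E2 μ v := by
  simp only [TwoStepReach, not_or] at h
  exact ⟨(total1 μ v (Ne.symm h.1)).resolve_right h.2.1,
    (total2 μ v (Ne.symm h.1)).resolve_right h.2.2.1⟩

theorem beats_of_not_twoStepReach_of_inNeighbour {v μ s : α}
    (total1 : ∀ i j, i ≠ j → E1 i j ∨ E1 j i) (h : ¬ TwoStepReach E1 E2 v μ)
    (hs : E2 s μ) : E1 s v := by
  simp only [TwoStepReach, not_or, not_exists, not_and] at h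
  have hsv : s ≠ v := by
    rintro rfl
    exact h.2.2.1 hs
  exact (total1 s v hsv).resolve_right fun hvs => h.2.2.2 s hvs hs

section Orbit

variable {g : α → α}

theorem beats_iterate_add_succ (asymm1 : ∀ i j, E1 i j → ¬ E1 j i)
    (total2 : ∀ i j, i ≠ j → E2 i j ∨ E2 j i)
    (beats : ∀ μ, E1 μ (g μ) ∧ E2 μ (g μ)) (hg : ∀ μ s, E2 s μ → E1 s (g μ))
    (x : α) (d s : ℕ) :
    E1 (g^[s] x) (g^[s + d + 1] x) ∧ E2 (g^[s] x) (g^[s + d + 1] x) := by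
  induction d generalizing s with
  | zero => simpa only [add_zero, Function.iterate_succ_apply'] using beats (g^[s] x)
  | succ d ih =>
    set a : ℕ → α := fun t => g^[t] x
    have step : ∀ t, a (t + 1) = g (a t) := fun t => Function.iterate_succ_apply' g t x
    have hidx : s + (d + 1) + 1 = s + d + 1 + 1 := by omega
    have hE1 : E1 (a s) (a (s + d + 1 + 1)) := step _ ▸ hg _ _ (ih s).2
    refine hidx ▸ ⟨hE1, ?_⟩
    have hne : a s ≠ a (s + d + 1 + 1) := fun he => asymm1 _ _ hE1 (he ▸ hE1)
    refine (total2 _ _ hne).resolve_right fun hrev => ?_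
    -- `a (s+1) = g (a s)` beats `a (s+d+2)` in `T1` by induction, and is beaten by it via `hg`.
    have later : E1 (a (s + 1)) (a (s + d + 1 + 1)) := by
      simpa only [show s + 1 + d + 1 = s + d + 1 + 1 by omega] using (ih (s + 1)).1
    exact asymm1 _ _ later (step s ▸ hg _ _ hrev)

theorem injective_iterate (asymm1 : ∀ i j, E1 i j → ¬ E1 j i)
    (total2 : ∀ i j, i ≠ j → E2 i j ∨ E2 j i)
    (beats : ∀ μ, E1 μ (g μ) ∧ E2 μ (g μ)) (hg : ∀ μ s, E2 s μ → E1 s (g μ)) (x : α) :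
    Function.Injective fun t => g^[t] x := by
  have ne : ∀ s d, g^[s] x ≠ g^[s + d + 1] x := fun s d he => by
    have h := (beats_iterate_add_succ asymm1 total2 beats hg x d s).1
    rw [← he] at h
    exact asymm1 _ _ h h
  intro s t hst
  rcases lt_trichotomy s t with hlt | rfl | hlt
  · obtain ⟨d, rfl⟩ := Nat.exists_eq_add_of_lt hlt
    exact absurd hst (ne s d)
  · rfl
  · obtain ⟨d, rfl⟩ := Nat.exists_eq_add_of_lt hlt
    exact absurd hst.symm (ne t d)

end Orbit

theorem exists_forall_twoStepReach [Finite α] [Nonempty α]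
    (asymm1 : ∀ i j, E1 i j → ¬ E1 j i) (total1 : ∀ i j, i ≠ j → E1 i j ∨ E1 j i)
    (total2 : ∀ i j, i ≠ j → E2 i j ∨ E2 j i) :
    ∃ μ, ∀ i, TwoStepReach E1 E2 i μ := by
  by_contra! h
  choose g hg using h
  have inj := injective_iterate asymm1 total2
    (fun μ => beats_of_not_twoStepReach total1 total2 (hg μ))
    (fun μ _ => beats_of_not_twoStepReach_of_inNeighbour total1 (hg μ))
    (Classical.arbitrary α)
  exact not_injective_infinite_finite _ inj

theorem exists_absorbed_vertex_general (n : ℕ) (hn : 1 ≤ n)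
    (E1 E2 : Fin n → Fin n → Prop)
    (hT1irr : ∀ i, ¬ E1 i i)
    (hT1 : ∀ i j : Fin n, i ≠ j → (E1 i j ↔ ¬ E1 j i))
    (hT2 : ∀ i j : Fin n, i ≠ j → (E2 i j ↔ ¬ E2 j i)) :
    ∃ μ : Fin n, ∀ i : Fin n,
      i = μ ∨ E1 i μ ∨ E2 i μ ∨ ∃ k : Fin n, E1 i k ∧ E2 k μ := by
  have : Nonempty (Fin n) := ⟨⟨0, hn⟩⟩
  exact exists_forall_twoStepReach (asymm_of_tournament hT1irr hT1)
    (total_of_tournament hT1) (total_of_tournament hT2)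

/-- For any two tournaments `T1`, `T2` on `{1,…,n}` (n ≥ 1) there is a
vertex `μ` such that `i ⇒ μ` for every vertex `i`, where `i ⇒ j` means `i = j`,
or `(i,j) ∈ E1`, or `(i,j) ∈ E2`, or there is `k` with `(i,k) ∈ E1` and `(k,j) ∈ E2`. -/
theorem exists_absorbed_vertex (n : ℕ) (hn : 1 ≤ n)
    (E1 E2 : Fin n → Fin n → Prop)
    (hT1irr : ∀ i, ¬ E1 i i)
    (hT1 : ∀ i j : Fin n, i ≠ j → (E1 i j ↔ ¬ E1 j i))
    (hT2irr : ∀ i, ¬ E2 i i)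
    (hT2 : ∀ i j : Fin n, i ≠ j → (E2 i j ↔ ¬ E2 j i)) :
    ∃ μ : Fin n, ∀ i : Fin n,
      i = μ ∨ E1 i μ ∨ E2 i μ ∨ ∃ k : Fin n, E1 i k ∧ E2 k μ :=
  exists_absorbed_vertex_general n hn E1 E2 hT1irr hT1 hT2
end

section
/- Let T_R = ([n], E_red) and T_B = ([n], E_blue) be two tournaments (a red one and a blue one) on the vertex set {1,...,n} (n ≥ 1). Then there exists a vertex ν (a king) such that every vertex j is reachable from ν by a rainbow directed path of length at most 2, i.e., for every j either ν = j, or (ν,j) ∈ E_red, or (ν,j) ∈ E_blue, or there exists k with (ν,k) ∈ E_red and (k,j) ∈ E_blue, or there exists k with (ν,k) ∈ E_blue and (k,j) ∈ E_red. -/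
/-!
A vertex `ν` whose out-neighbourhood in the union of the two tournaments is largest is a king.
If `ν` reached no rainbow path to `j`, then `j` would beat `ν` in red, and every red (blue)
out-neighbour `k` of `ν` would be a blue (red) out-neighbour of `j`, since otherwise `ν → k → j`
is rainbow; so the union out-neighbourhood of `j` would strictly contain that of `ν`.
-/

section RainbowKing

variable {V : Type*} (R B : V → V → Prop)

def RainbowReachable (v j : V) : Prop :=
  v = j ∨ R v j ∨ B v j ∨ (∃ k, R v k ∧ B k j) ∨ (∃ k, B v k ∧ R k j)

def unionOutNeighbors (v : V) : Set V :=
  {k | k ≠ v ∧ (R v k ∨ B v k)}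

variable {R B}

theorem unionOutNeighbors_ssubset_of_not_rainbowReachable
    (hR : ∀ i j, i ≠ j → ¬ R j i → R i j) (hB : ∀ i j, i ≠ j → ¬ B j i → B i j)
    {v j : V} (h : ¬ RainbowReachable R B v j) :
    unionOutNeighbors R B v ⊂ unionOutNeighbors R B j := by
  simp only [RainbowReachable, not_or, not_exists, not_and] at h
  obtain ⟨hvj, hRvj, hBvj, hRB, hBR⟩ := h
  refine Set.ssubset_iff_of_subset ?_ |>.mpr ⟨v, ?_, fun hv => hv.1 rfl⟩
  · rintro k ⟨-, hk⟩
    have hkj : k ≠ j := by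
      rintro rfl
      exact hk.elim hRvj hBvj
    refine ⟨hkj, ?_⟩
    rcases hk with hRvk | hBvk
    · exact Or.inr (hB j k hkj.symm (hRB k hRvk))
    · exact Or.inl (hR j k hkj.symm (hBR k hBvk))
  · exact ⟨hvj, Or.inl (hR j v (Ne.symm hvj) hRvj)⟩

theorem exists_forall_rainbowReachable [Finite V] [Nonempty V]
    (hR : ∀ i j, i ≠ j → ¬ R j i → R i j) (hB : ∀ i j, i ≠ j → ¬ B j i → B i j) :
    ∃ v, ∀ j, RainbowReachable R B v j := by
  obtain ⟨v, hv⟩ := Finite.exists_max fun v => (unionOutNeighbors R B v).ncard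
  refine ⟨v, fun j => by_contra fun h => ?_⟩
  exact (hv j).not_gt
    (Set.ncard_lt_ncard (unionOutNeighbors_ssubset_of_not_rainbowReachable hR hB h))

end RainbowKing

theorem rainbow_king_general (n : ℕ) (hn : 1 ≤ n)
    (Ered Eblue : Fin n → Fin n → Prop)
    (hTR : ∀ i j : Fin n, i ≠ j → (Ered i j ↔ ¬ Ered j i))
    (hTB : ∀ i j : Fin n, i ≠ j → (Eblue i j ↔ ¬ Eblue j i)) :
    ∃ ν : Fin n, ∀ j : Fin n,
      ν = j ∨ Ered ν j ∨ Eblue ν j ∨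
        (∃ k : Fin n, Ered ν k ∧ Eblue k j) ∨
        (∃ k : Fin n, Eblue ν k ∧ Ered k j) :=
  have : Nonempty (Fin n) := ⟨⟨0, hn⟩⟩
  exists_forall_rainbowReachable (fun i j h => (hTR i j h).mpr) (fun i j h => (hTB i j h).mpr)

/-- For a red tournament `T_R` and a blue tournament `T_B` on `{1,…,n}`
(n ≥ 1) there is a king `ν`: every `j` is reachable from `ν` by a rainbow directed
path of length at most 2 (a single red or blue edge, or a red edge followed by a
blue edge, or a blue edge followed by a red edge, or the trivial path). -/
theorem rainbow_king (n : ℕ) (hn : 1 ≤ n)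
    (Ered Eblue : Fin n → Fin n → Prop)
    (hTRirr : ∀ i, ¬ Ered i i)
    (hTR : ∀ i j : Fin n, i ≠ j → (Ered i j ↔ ¬ Ered j i))
    (hTBirr : ∀ i, ¬ Eblue i i)
    (hTB : ∀ i j : Fin n, i ≠ j → (Eblue i j ↔ ¬ Eblue j i)) :
    ∃ ν : Fin n, ∀ j : Fin n,
      ν = j ∨ Ered ν j ∨ Eblue ν j ∨
        (∃ k : Fin n, Ered ν k ∧ Eblue k j) ∨
        (∃ k : Fin n, Eblue ν k ∧ Ered k j) :=
  rainbow_king_general n hn Ered Eblue hTR hTB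
end

section
/- Let T1 = ([n], E1) and T2 = ([n], E2) be two tournaments on the vertex set {1,...,n}, and let i, j be vertices with i ≠ j. If the relation i ⇒ j fails (i.e., not (i = j ∨ (i,j) ∈ E1 ∨ (i,j) ∈ E2 ∨ ∃k, (i,k) ∈ E1 ∧ (k,j) ∈ E2)), then the out-degree of i in T1 is strictly smaller than the out-degree of j in T2, i.e., |Γ1(i)| < |Γ2(j)|. -/
open Finset

theorem Finset.card_filter_lt_card_filter {α : Type*} [Fintype α] {p q : α → Prop}
    [DecidablePred p] [DecidablePred q] (hpq : ∀ x, p x → q x) {x : α} (hqx : q x)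
    (hpx : ¬ p x) : #{y | p y} < #{y | q y} :=
  card_lt_card <| (ssubset_iff_of_subset (monotone_filter_right _ fun y _ => hpq y)).2
    ⟨x, by simpa using hqx, by simpa using hpx⟩

theorem not_reach_outdeg_lt_general (n : ℕ)
    (E1 E2 : Fin n → Fin n → Prop)
    [DecidableRel E1] [DecidableRel E2]
    (hT1irr : ∀ i, ¬ E1 i i)
    (hT2 : ∀ i j : Fin n, i ≠ j → (E2 i j ↔ ¬ E2 j i))
    (i j : Fin n) (hij : i ≠ j)
    (hnot : ¬ (i = j ∨ E1 i j ∨ E2 i j ∨ ∃ k : Fin n, E1 i k ∧ E2 k j)) :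
    (Finset.univ.filter (fun k => E1 i k)).card <
      (Finset.univ.filter (fun k => E2 j k)).card := by
  simp only [not_or, not_exists, not_and] at hnot
  obtain ⟨-, hE1ij, hE2ij, hno_path⟩ := hnot
  have hE2_of_not {k} (hkj : k ≠ j) (hk : ¬ E2 k j) : E2 j k := (hT2 j k hkj.symm).2 hk
  -- `Γ₁(i) ⊆ Γ₂(j)`, and `i` itself lies in `Γ₂(j) \ Γ₁(i)`.
  refine card_filter_lt_card_filter (fun k hik => ?_) (hE2_of_not hij hE2ij) (hT1irr i)
  exact hE2_of_not (by rintro rfl; exact hE1ij hik) (hno_path k hik)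

/-- For tournaments `T1`, `T2` on `{1,…,n}` and distinct vertices `i ≠ j`,
if `i ⇒ j` fails then the out-degree of `i` in `T1` is strictly smaller than the
out-degree of `j` in `T2`. -/
theorem not_reach_outdeg_lt (n : ℕ)
    (E1 E2 : Fin n → Fin n → Prop)
    [DecidableRel E1] [DecidableRel E2]
    (hT1irr : ∀ i, ¬ E1 i i)
    (hT1 : ∀ i j : Fin n, i ≠ j → (E1 i j ↔ ¬ E1 j i))
    (hT2irr : ∀ i, ¬ E2 i i)
    (hT2 : ∀ i j : Fin n, i ≠ j → (E2 i j ↔ ¬ E2 j i))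
    (i j : Fin n) (hij : i ≠ j)
    (hnot : ¬ (i = j ∨ E1 i j ∨ E2 i j ∨ ∃ k : Fin n, E1 i k ∧ E2 k j)) :
    (Finset.univ.filter (fun k => E1 i k)).card <
      (Finset.univ.filter (fun k => E2 j k)).card :=
  not_reach_outdeg_lt_general n E1 E2 hT1irr hT2 i j hij hnot
end
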